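/- arXiv:math/0702515 — 4 statements merged into one kernel-verified Lean document; each statement's English description precedes it below -/
import Mathlib

section
/- Let δ be a dissimilarity map on {1,…,m} satisfying the Kalmanson conditions with respect to the identity circular ordering, and let Q_δ(i,j) = (m−2)·δ(i,j) − Σ_{t≠i} δ(i,t) − Σ_{t≠j} δ(j,t). Then for every index i with i + 2 ≤ m, Q_δ(i, i+2) − Q_δ(i, i+1) ≥ 0. -/
/-- A dissimilarity map on `{1,…,m}` (modeled as `Fin m`): symmetric,
nonnegative, and zero on the diagonal. -/
def IsDissimilarity {m : ℕ} (δ : Fin m → Fin m → ℝ) : Prop :=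
  (∀ i j, δ i j = δ j i) ∧ (∀ i j, 0 ≤ δ i j) ∧ (∀ i, δ i i = 0)

/-- The Kalmanson conditions with respect to the identity circular ordering. -/
def Kalmanson {m : ℕ} (δ : Fin m → Fin m → ℝ) : Prop :=
  ∀ i j k l : Fin m, i < j → j < k → k < l →
    δ i j + δ k l ≤ δ i k + δ j l ∧ δ i l + δ j k ≤ δ i k + δ j l

/-- The neighbor-joining selection criterion
`Q_δ(i,j) = (m−2)·δ(i,j) − Σ_{t≠i} δ(i,t) − Σ_{t≠j} δ(j,t)`. -/
noncomputable def Qcrit {m : ℕ} (δ : Fin m → Fin m → ℝ) (i j : Fin m) : ℝ :=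
  ((m : ℝ) - 2) * δ i j - ∑ t ∈ Finset.univ.erase i, δ i t
    - ∑ t ∈ Finset.univ.erase j, δ j t

/-- if `δ` is a Kalmanson dissimilarity map on `{1,…,m}`, then
for every index `i` with `i + 2 ≤ m` one has `Q_δ(i,i+2) − Q_δ(i,i+1) ≥ 0`. -/
theorem Q_one_middle {m : ℕ} (δ : Fin m → Fin m → ℝ)
    (hdis : IsDissimilarity δ) (hK : Kalmanson δ)
    (i j k : Fin m) (hj : (j : ℕ) = (i : ℕ) + 1) (hk : (k : ℕ) = (i : ℕ) + 2) :
    Qcrit δ i k - Qcrit δ i j ≥ 0 := by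
  obtain ⟨hsymm, hnn, hdiag⟩ := hdis
  have hij : i ≠ j := by intro h; subst h; omega
  have hik : i ≠ k := by intro h; subst h; omega
  have hjk : j ≠ k := by intro h; subst h; omega
  set S : Finset (Fin m) := Finset.univ \ {i, j, k} with hS
  have hiS : i ∉ insert k S := by simp [hS, hik]
  have hjS : j ∉ insert k S := by simp [hS, hjk]
  have hkS : k ∉ S := by simp [hS]
  have hEj : Finset.univ.erase j = insert i (insert k S) := by
    ext t
    simp only [Finset.mem_erase, Finset.mem_univ, and_true, Finset.mem_insert,
      hS, Finset.mem_sdiff, Finset.mem_singleton, true_and]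
    by_cases h1 : t = i <;> by_cases h2 : t = j <;> by_cases h3 : t = k <;>
      simp_all
  have hEk : Finset.univ.erase k = insert i (insert j S) := by
    ext t
    simp only [Finset.mem_erase, Finset.mem_univ, and_true, Finset.mem_insert,
      hS, Finset.mem_sdiff, Finset.mem_singleton, true_and]
    by_cases h1 : t = i <;> by_cases h2 : t = j <;> by_cases h3 : t = k <;>
      simp_all
  have hjS' : j ∉ S := by simp [hS]
  have sum_j : ∑ t ∈ Finset.univ.erase j, δ j t
      = δ j i + (δ j k + ∑ t ∈ S, δ j t) := by
    rw [hEj, Finset.sum_insert hiS, Finset.sum_insert hkS]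
  have sum_k : ∑ t ∈ Finset.univ.erase k, δ k t
      = δ k i + (δ k j + ∑ t ∈ S, δ k t) := by
    rw [hEk, Finset.sum_insert (by simp [hS, hij, hik]),
      Finset.sum_insert hjS']
  have hm3 : 3 ≤ m := by omega
  have hcard : (S.card : ℝ) = (m : ℝ) - 3 := by
    have h1 : ({i, j, k} : Finset (Fin m)).card = 3 := by
      rw [Finset.card_insert_of_notMem (by simp [hij, hik]),
        Finset.card_insert_of_notMem (by simp [hjk]), Finset.card_singleton]
    have h2 : S.card = m - 3 := by
      rw [hS, Finset.card_sdiff_of_subset (by simp), h1]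
      simp
    rw [h2, Nat.cast_sub hm3]
    norm_num
  have key : Qcrit δ i k - Qcrit δ i j
      = ∑ t ∈ S, (δ i k - δ i j + δ j t - δ k t) := by
    have expand : ∑ t ∈ S, (δ i k - δ i j + δ j t - δ k t)
        = (S.card : ℝ) * (δ i k - δ i j) + ∑ t ∈ S, δ j t - ∑ t ∈ S, δ k t := by
      rw [Finset.sum_sub_distrib, Finset.sum_add_distrib, Finset.sum_const,
        nsmul_eq_mul]
    rw [expand, hcard, Qcrit, Qcrit, sum_j, sum_k, hsymm j i, hsymm k i,
      hsymm k j]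
    ring
  rw [key, ge_iff_le]
  apply Finset.sum_nonneg
  intro t ht
  have htm : t ∉ ({i, j, k} : Finset (Fin m)) := (Finset.mem_sdiff.mp ht).2
  simp only [Finset.mem_insert, Finset.mem_singleton, not_or] at htm
  obtain ⟨h1, h2, h3⟩ := htm
  have h1' : (t : ℕ) ≠ i := fun h => h1 (Fin.ext h)
  have h2' : (t : ℕ) ≠ j := fun h => h2 (Fin.ext h)
  have h3' : (t : ℕ) ≠ k := fun h => h3 (Fin.ext h)
  rcases lt_or_gt_of_ne h1' with hlt | hgt
  · have := (hK t i j k (Fin.lt_def.mpr hlt) (Fin.lt_def.mpr (by omega))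
      (Fin.lt_def.mpr (by omega))).2
    have e1 := hsymm t k
    have e2 := hsymm t j
    linarith
  · have htk : (k : ℕ) < t := by omega
    have := (hK i j k t (Fin.lt_def.mpr (by omega)) (Fin.lt_def.mpr (by omega))
      (Fin.lt_def.mpr htk)).1
    linarith
end

section
/- (Anarchy Lemma) Let δ be a dissimilarity map on {1,…,m} satisfying the Kalmanson conditions with respect to the identity circular ordering, and let Q_δ(i,j) = (m−2)·δ(i,j) − Σ_{t≠i} δ(i,t) − Σ_{t≠j} δ(j,t). Then for every index i with i + 3 ≤ m, Q_δ(i, i+3) − Q_δ(i+1, i+2) ≥ 0. -/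
section Qcrit

variable {m : ℕ} {δ : Fin m → Fin m → ℝ}

theorem Qcrit_eq_of_diag (hdiag : ∀ i, δ i i = 0) (i j : Fin m) :
    Qcrit δ i j = ((m : ℝ) - 2) * δ i j - ∑ t, δ i t - ∑ t, δ j t := by
  rw [Qcrit, Finset.sum_erase _ (hdiag i), Finset.sum_erase _ (hdiag j)]

theorem Qcrit_sub_Qcrit_eq_sum_compl (hsym : ∀ i j, δ i j = δ j i) (hdiag : ∀ i, δ i i = 0)
    {i k l j : Fin m} (hik : i ≠ k) (hil : i ≠ l) (hij : i ≠ j) (hkl : k ≠ l) (hkj : k ≠ j)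
    (hlj : l ≠ j) :
    Qcrit δ i j - Qcrit δ k l =
      ∑ t ∈ ({i, k, l, j} : Finset (Fin m))ᶜ,
        (δ k t + δ l t - δ i t - δ j t - (δ k l - δ i j)) := by
  set f : Fin m → ℝ := fun t => δ k t + δ l t - δ i t - δ j t - (δ k l - δ i j)
  have hfour : ∑ t ∈ ({i, k, l, j} : Finset (Fin m)), f t = 2 * (δ i j - δ k l) := by
    simp only [Finset.sum_insert, Finset.mem_insert, Finset.mem_singleton, Finset.sum_singleton,
      hik, hil, hij, hkl, hkj, hlj, or_self, not_false_eq_true, f, hdiag]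
    linarith [hsym i k, hsym i l, hsym i j, hsym k l, hsym k j, hsym l j]
  have htotal : ∑ t, f t = ∑ t, δ k t + ∑ t, δ l t - ∑ t, δ i t - ∑ t, δ j t
      - m * (δ k l - δ i j) := by
    simp [f, Finset.sum_sub_distrib, Finset.sum_add_distrib, mul_sub]
  rw [← Finset.sum_compl_add_sum ({i, k, l, j} : Finset (Fin m)), hfour] at htotal
  rw [Qcrit_eq_of_diag hdiag, Qcrit_eq_of_diag hdiag]
  linarith

end Qcrit

theorem Kalmanson.add_le_of_lt_or_gt {m : ℕ} {δ : Fin m → Fin m → ℝ} (hK : Kalmanson δ)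
    (hsym : ∀ i j, δ i j = δ j i) {i k l j t : Fin m} (hik : i < k) (hkl : k < l) (hlj : l < j)
    (ht : t < i ∨ j < t) :
    δ k l + δ i t + δ j t ≤ δ i j + δ k t + δ l t := by
  rcases ht with hti | hjt
  · have h₁ := (hK t i k l hti hik hkl).1
    have h₂ := (hK t i l j hti (hik.trans hkl) hlj).2
    linarith [hsym i t, hsym j t, hsym k t, hsym l t]
  · have h₁ := (hK i k l t hik hkl (hlj.trans hjt)).2
    have h₂ := (hK i l j t (hik.trans hkl) hlj hjt).1
    linarith

/-- Anarchy Lemma: if `δ` is a Kalmanson dissimilarity map on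
`{1,…,m}`, then for every index `i` with `i + 3 ≤ m` one has
`Q_δ(i,i+3) − Q_δ(i+1,i+2) ≥ 0`. -/
theorem Q_anarchy {m : ℕ} (δ : Fin m → Fin m → ℝ)
    (hdis : IsDissimilarity δ) (hK : Kalmanson δ)
    (i k l j : Fin m) (hk : (k : ℕ) = (i : ℕ) + 1) (hl : (l : ℕ) = (i : ℕ) + 2)
    (hj : (j : ℕ) = (i : ℕ) + 3) :
    Qcrit δ i j - Qcrit δ k l ≥ 0 := by
  obtain ⟨hsym, -, hdiag⟩ := hdis
  have hik : i < k := by rw [Fin.lt_def]; omega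
  have hkl : k < l := by rw [Fin.lt_def]; omega
  have hlj : l < j := by rw [Fin.lt_def]; omega
  rw [ge_iff_le, Qcrit_sub_Qcrit_eq_sum_compl hsym hdiag hik.ne (hik.trans hkl).ne
    (hik.trans (hkl.trans hlj)).ne hkl.ne (hkl.trans hlj).ne hlj.ne]
  refine Finset.sum_nonneg fun t ht => ?_
  have hout : t < i ∨ j < t := by
    simp only [Finset.mem_compl, Finset.mem_insert, Finset.mem_singleton, Fin.ext_iff] at ht
    simp only [Fin.lt_def]
    omega
  linarith [hK.add_le_of_lt_or_gt hsym hik hkl hlj hout]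
end

section
/- Let δ be a dissimilarity map on {1,…,m} satisfying the Kalmanson conditions with respect to the identity circular ordering, and write δ_{xy}(z) = δ(x,z) + δ(y,z) − δ(x,y) for the Farris transform. Then for all indices i < x < y < z < j < t in {1,…,m}: δ_{xy}(z) + δ_{xz}(y) + δ_{yz}(x) + δ_{xy}(t) + δ_{xz}(t) + δ_{yz}(t) ≥ 3·δ_{ij}(t) + δ_{ij}(x) + δ_{ij}(y) + δ_{ij}(z). -/
/-- The Farris transform `δ_{xy}(z) = δ(x,z) + δ(y,z) − δ(x,y)`. -/
def farris {m : ℕ} (δ : Fin m → Fin m → ℝ) (x y z : Fin m) : ℝ :=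
  δ x z + δ y z - δ x y

section

variable {m : ℕ} {δ : Fin m → Fin m → ℝ}

theorem farris_sum_triple_eq (hsym : ∀ a b, δ a b = δ b a) (x y z t : Fin m) :
    farris δ x y z + farris δ x z y + farris δ y z x +
      farris δ x y t + farris δ x z t + farris δ y z t =
    2 * (δ x t + δ y t + δ z t) := by
  simp only [farris]
  linarith [hsym x y, hsym x z, hsym y z]

theorem Kalmanson.farris_add_farris_le (hK : Kalmanson δ) (hsym : ∀ a b, δ a b = δ b a)
    {i p j t : Fin m} (hip : i < p) (hpj : p < j) (hjt : j < t) :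
    farris δ i j t + farris δ i j p ≤ 2 * δ p t := by
  obtain ⟨hijt, hitj⟩ := hK i p j t hip hpj hjt
  simp only [farris]
  linarith [hsym j p]

end

/-- if `δ` is a Kalmanson dissimilarity map on `{1,…,m}`, then
for all indices `i < x < y < z < j < t`:
`δ_{xy}(z) + δ_{xz}(y) + δ_{yz}(x) + δ_{xy}(t) + δ_{xz}(t) + δ_{yz}(t)
  ≥ 3·δ_{ij}(t) + δ_{ij}(x) + δ_{ij}(y) + δ_{ij}(z)`. -/
theorem farris_three_times {m : ℕ} (δ : Fin m → Fin m → ℝ)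
    (hdis : IsDissimilarity δ) (hK : Kalmanson δ)
    (i x y z j t : Fin m)
    (h1 : i < x) (h2 : x < y) (h3 : y < z) (h4 : z < j) (h5 : j < t) :
    farris δ x y z + farris δ x z y + farris δ y z x +
      farris δ x y t + farris δ x z t + farris δ y z t ≥
    3 * farris δ i j t + farris δ i j x + farris δ i j y + farris δ i j z := by
  have hsym := hdis.1
  have hx := hK.farris_add_farris_le hsym h1 (h2.trans (h3.trans h4)) h5
  have hy := hK.farris_add_farris_le hsym (h1.trans h2) (h3.trans h4) h5
  have hz := hK.farris_add_farris_le hsym (h1.trans (h2.trans h3)) h4 h5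
  rw [farris_sum_triple_eq hsym]
  linarith
end

section
/- Let δ be a dissimilarity map on {1,…,m} satisfying the Kalmanson conditions with respect to the identity circular ordering, and let Q_δ(i,j) = (m−2)·δ(i,j) − Σ_{t≠i} δ(i,t) − Σ_{t≠j} δ(j,t). If i < j − 3 (with 1 ≤ i < j ≤ m), then there exists an index k ∈ {1,…,m} such that Q_δ(i,j) − Q_δ(k, k⊕1) ≥ 0, where k⊕1 denotes the cyclic successor of k (i.e., k+1 if k < m, and 1 if k = m). -/
/-!
Rotate the circular order so that the pair becomes `(0, n)` with `1 ≤ n` and `2 n ≤ m`: one of the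
two arcs between `i` and `j` covers at most half of the circle. Write `P = Σ_{k<n} δ(k,k+1)`. Summed
over the `n` adjacent pairs of that arc,
`Σ_{k<n} (Q(0,n) - Q(k,k+1)) = (m-2)(n δ(0,n) - P) + Σ_t Σ_{0<v<n} (2 δ(v,t) - δ(0,t) - δ(n,t))`.
For a point `t` off the arc the Kalmanson conditions for `0 < v < n < t` bound the inner sum below by
`Σ_{0<v<n} (δ(0,v) + δ(v,n) - 2 δ(0,n))`.
Since there are `m - n - 1 ≥ n - 1` points off the arc, the total is at least `2 T + (m - 2n) H`, where
`H = Σ_{0<v<n} (δ(0,v) + δ(v,n)) - (n-2) δ(0,n) - P` and `T = Σ_{0<v<n} Σ_{t≤n} δ(v,t) - (n-1) P`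
are both sums of Kalmanson gaps. So the total is nonnegative, and then some summand is too.
-/

open Finset Fin.NatCast

theorem sum_range_succ_eq_add_sum_Ico_add {M : Type*} [AddCommMonoid M] (f : ℕ → M) {n : ℕ}
    (hn : 1 ≤ n) : ∑ k ∈ range (n + 1), f k = f 0 + ∑ k ∈ Ico 1 n, f k + f n := by
  rw [range_eq_Ico, sum_eq_sum_Ico_succ_bot (by omega), sum_Ico_succ_top hn, add_assoc]

theorem sum_range_add_succ {M : Type*} [AddCommMonoid M] (f : ℕ → M) {n : ℕ} (hn : 1 ≤ n) :
    ∑ k ∈ range n, (f k + f (k + 1)) = f 0 + 2 • ∑ k ∈ Ico 1 n, f k + f n := by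
  induction n, hn using Nat.le_induction with
  | base => simp
  | succ n hn ih => rw [sum_range_succ, ih, sum_Ico_succ_top hn]; abel

def KalmansonOnRange (N : ℕ) (d : ℕ → ℕ → ℝ) : Prop :=
  ∀ a b c e, a < b → b < c → c < e → e < N →
    d a b + d c e ≤ d a c + d b e ∧ d a e + d b c ≤ d a c + d b e

def pathSum (d : ℕ → ℕ → ℝ) (n : ℕ) : ℝ := ∑ k ∈ range n, d k (k + 1)

def interiorRowSum (d : ℕ → ℕ → ℝ) (n : ℕ) : ℝ := ∑ v ∈ Ico 1 n, ∑ t ∈ range (n + 1), d v t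

noncomputable def natQcrit (m : ℕ) (d : ℕ → ℕ → ℝ) (a b : ℕ) : ℝ :=
  ((m : ℝ) - 2) * d a b - ∑ t ∈ range m, d a t - ∑ t ∈ range m, d b t

section NatIndexed

variable {N : ℕ} {d : ℕ → ℕ → ℝ}

theorem KalmansonOnRange.pathSum_le {e : ℕ} (hK : KalmansonOnRange N d) (he : e < N) {q : ℕ}
    (hq : 1 ≤ q) (hqe : q ≤ e) :
    ((q : ℝ) - 1) * d 0 e + pathSum d q ≤ ∑ v ∈ Ico 1 q, (d 0 v + d v e) + d 0 q := by
  -- at `q = e` this is `H ≥ 0`; the step from `q` to `q + 1` adds the gap of `(0, q, q + 1, e)`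
  induction q, hq using Nat.le_induction with
  | base => simp [pathSum]
  | succ q hq ih =>
    have hstep : d 0 e + d q (q + 1) ≤ d 0 (q + 1) + d q e := by
      rcases (Nat.lt_or_ge (q + 1) e) with hlt | hge
      · exact (hK 0 q (q + 1) e (by omega) (by omega) hlt he).2
      · rw [show q + 1 = e by omega]
    rw [pathSum, sum_range_succ, ← pathSum, sum_Ico_succ_top hq]
    push_cast
    linarith [ih (by omega)]

theorem interiorRowSum_sub_pathSum_succ_succ (hsymm : ∀ a b, d a b = d b a)
    (hdiag : ∀ a, d a a = 0) (n : ℕ) :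
    interiorRowSum d (n + 2) - ((n : ℝ) + 1) * pathSum d (n + 2)
      = interiorRowSum d (n + 1) - (n : ℝ) * pathSum d (n + 1)
        + ∑ k ∈ range n, (d k (n + 1) + d (k + 1) (n + 2) - d k (k + 1) - d (n + 1) (n + 2)) := by
  have hrow : ∑ t ∈ range (n + 3), d (n + 1) t
      = ∑ k ∈ range n, d k (n + 1) + d n (n + 1) + d (n + 1) (n + 2) := by
    simp only [sum_range_succ, hdiag, hsymm (n + 1)]
    ring
  have hcol : ∑ v ∈ Ico 1 (n + 1), d v (n + 2) = ∑ k ∈ range n, d (k + 1) (n + 2) := by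
    rw [range_eq_Ico, sum_Ico_add' (fun v => d v (n + 2))]
  have hinner : ∑ v ∈ Ico 1 (n + 1), ∑ t ∈ range (n + 3), d v t
      = interiorRowSum d (n + 1) + ∑ k ∈ range n, d (k + 1) (n + 2) := by
    rw [interiorRowSum, ← hcol, ← sum_add_distrib]
    exact sum_congr rfl fun v _ => sum_range_succ _ _
  have hpath : pathSum d (n + 2) = pathSum d (n + 1) + d (n + 1) (n + 2) := sum_range_succ _ _
  have hpath' : pathSum d (n + 1) = pathSum d n + d n (n + 1) := sum_range_succ _ _
  rw [interiorRowSum, sum_Ico_succ_top (by omega), hrow, hinner, hpath, hpath']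
  simp only [pathSum, sum_sub_distrib, sum_add_distrib, sum_const, card_range, nsmul_eq_mul]
  ring

theorem KalmansonOnRange.pathSum_le_interiorRowSum (hsymm : ∀ a b, d a b = d b a)
    (hdiag : ∀ a, d a a = 0) (hK : KalmansonOnRange N d) {n : ℕ} (hn : n < N) :
    ((n : ℝ) - 1) * pathSum d n ≤ interiorRowSum d n := by
  induction n using Nat.twoStepInduction with
  | zero => simp [pathSum, interiorRowSum]
  | one => simp [pathSum, interiorRowSum]
  | more n _ ih =>
    have hgaps : 0 ≤ ∑ k ∈ range n,
        (d k (n + 1) + d (k + 1) (n + 2) - d k (k + 1) - d (n + 1) (n + 2)) :=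
      sum_nonneg fun k hk => by
        have := (hK k (k + 1) (n + 1) (n + 2) (by omega) (by simp at hk; omega) (by omega) hn).1
        linarith
    have := ih (by omega)
    push_cast at this ⊢
    linarith [interiorRowSum_sub_pathSum_succ_succ hsymm hdiag n]

theorem sum_natQcrit_sub_eq (m : ℕ) (d : ℕ → ℕ → ℝ) {n : ℕ} (hn : 1 ≤ n) :
    ∑ k ∈ range n, (natQcrit m d 0 n - natQcrit m d k (k + 1))
      = ((m : ℝ) - 2) * (n * d 0 n - pathSum d n)
        + ∑ t ∈ range m, ∑ v ∈ Ico 1 n, (2 * d v t - d 0 t - d n t) := by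
  have hrows := sum_range_add_succ (fun a => ∑ t ∈ range m, d a t) hn
  rw [sum_add_distrib, two_nsmul] at hrows
  rw [sum_comm]
  simp only [natQcrit, pathSum, sum_sub_distrib, ← mul_sum, sum_const, card_range, Nat.card_Ico,
    nsmul_eq_mul]
  rw [Nat.cast_sub hn]
  linear_combination hrows

theorem KalmansonOnRange.sum_Ico_le_of_lt (hK : KalmansonOnRange N d) {n t : ℕ} (ht : n < t)
    (htN : t < N) :
    ∑ v ∈ Ico 1 n, (d 0 v + d v n - 2 * d 0 n) ≤ ∑ v ∈ Ico 1 n, (2 * d v t - d 0 t - d n t) :=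
  sum_le_sum fun v hv => by
    rw [mem_Ico] at hv
    obtain ⟨h₁, h₂⟩ := hK 0 v n t (by omega) hv.2 ht htN
    linarith

theorem sum_range_succ_sum_Ico_eq (hsymm : ∀ a b, d a b = d b a) (hdiag : ∀ a, d a a = 0)
    {n : ℕ} (hn : 1 ≤ n) :
    ∑ t ∈ range (n + 1), ∑ v ∈ Ico 1 n, (2 * d v t - d 0 t - d n t)
      = 2 * interiorRowSum d n
        - ((n : ℝ) - 1) * (∑ v ∈ Ico 1 n, (d 0 v + d v n) + 2 * d 0 n) := by
  have hfirst : ∑ t ∈ range (n + 1), d 0 t = ∑ v ∈ Ico 1 n, d 0 v + d 0 n := by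
    rw [sum_range_succ_eq_add_sum_Ico_add _ hn, hdiag, zero_add]
  have hlast : ∑ t ∈ range (n + 1), d n t = ∑ v ∈ Ico 1 n, d v n + d 0 n := by
    rw [sum_range_succ_eq_add_sum_Ico_add _ hn, hdiag, hsymm n 0, add_zero, add_comm (d 0 n)]
    simp only [hsymm n]
  rw [sum_comm, interiorRowSum]
  simp only [sum_sub_distrib, ← mul_sum, sum_const, Nat.card_Ico, nsmul_eq_mul, hfirst, hlast,
    sum_add_distrib]
  rw [Nat.cast_sub hn]
  ring

theorem KalmansonOnRange.sum_natQcrit_sub_nonneg {m : ℕ} (hsymm : ∀ a b, d a b = d b a)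
    (hdiag : ∀ a, d a a = 0) (hK : KalmansonOnRange m d) {n : ℕ} (hn : 1 ≤ n) (hnm : 2 * n ≤ m) :
    0 ≤ ∑ k ∈ range n, (natQcrit m d 0 n - natQcrit m d k (k + 1)) := by
  -- `H ≥ 0` and `T ≥ 0`
  have hpath := hK.pathSum_le (e := n) (by omega) hn le_rfl
  have hinterior := hK.pathSum_le_interiorRowSum hsymm hdiag (n := n) (by omega)
  have houter : ((m - (n + 1) : ℕ) : ℝ) * ∑ v ∈ Ico 1 n, (d 0 v + d v n - 2 * d 0 n)
      ≤ ∑ t ∈ Ico (n + 1) m, ∑ v ∈ Ico 1 n, (2 * d v t - d 0 t - d n t) := by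
    rw [← Nat.card_Ico, ← nsmul_eq_mul]
    exact card_nsmul_le_sum _ _ _ fun t ht => hK.sum_Ico_le_of_lt (mem_Ico.1 ht).1 (mem_Ico.1 ht).2
  rw [sum_natQcrit_sub_eq m d hn, ← sum_range_add_sum_Ico _ (show n + 1 ≤ m by omega),
    sum_range_succ_sum_Ico_eq hsymm hdiag hn]
  have hconst : ∑ v ∈ Ico 1 n, (d 0 v + d v n - 2 * d 0 n)
      = ∑ v ∈ Ico 1 n, (d 0 v + d v n) - ((n : ℝ) - 1) * (2 * d 0 n) := by
    rw [sum_sub_distrib, sum_const, Nat.card_Ico, nsmul_eq_mul, Nat.cast_sub hn, Nat.cast_one]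
  rw [hconst, Nat.cast_sub (by omega)] at houter
  push_cast at houter
  have hm : (0 : ℝ) ≤ m - 2 * n := by
    rw [sub_nonneg]
    exact_mod_cast hnm
  linarith [mul_nonneg hm (sub_nonneg.2 hpath)]

end NatIndexed

section FinIndexed

variable {m : ℕ} {δ : Fin m → Fin m → ℝ}

theorem Qcrit_comm (hsymm : ∀ a b, δ a b = δ b a) (a b : Fin m) : Qcrit δ a b = Qcrit δ b a := by
  rw [Qcrit, Qcrit, hsymm a b]
  ring

theorem Qcrit_rotate [NeZero m] (r x y : Fin m) :
    Qcrit (fun a b => δ (a + r) (b + r)) x y = Qcrit δ (x + r) (y + r) := by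
  have hrow : ∀ z : Fin m,
      ∑ t ∈ univ.erase z, δ (z + r) (t + r) = ∑ t ∈ univ.erase (z + r), δ (z + r) t :=
    fun z => sum_equiv (Equiv.addRight r) (by simp) fun _ _ => rfl
  simp only [Qcrit, hrow]

theorem Kalmanson.rotate_one [NeZero m] (hsymm : ∀ a b, δ a b = δ b a) (hK : Kalmanson δ) :
    Kalmanson (fun a b => δ (a + 1) (b + 1)) := by
  intro a b c e hab hbc hce
  rw [Fin.lt_def] at hab hbc hce
  have ha : (a + 1).val = a.val + 1 := Fin.val_add_one_of_lt' (by omega)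
  have hb : (b + 1).val = b.val + 1 := Fin.val_add_one_of_lt' (by omega)
  have hc : (c + 1).val = c.val + 1 := Fin.val_add_one_of_lt' (by omega)
  rcases Nat.lt_or_ge (e.val + 1) m with hlt | hge
  · have he : (e + 1).val = e.val + 1 := Fin.val_add_one_of_lt' hlt
    exact hK _ _ _ _ (by rw [Fin.lt_def]; omega) (by rw [Fin.lt_def]; omega)
      (by rw [Fin.lt_def]; omega)
  · -- `e + 1 = 0` now comes first, and the two conditions are invariant under cyclic rotation
    have he : (e + 1).val = 0 := by
      rw [Fin.val_add, Fin.val_one', Nat.add_mod_mod, show e.val + 1 = m by omega, Nat.mod_self]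
    obtain ⟨h₁, h₂⟩ := hK (e + 1) (a + 1) (b + 1) (c + 1) (by rw [Fin.lt_def]; omega)
      (by rw [Fin.lt_def]; omega) (by rw [Fin.lt_def]; omega)
    simp only [hsymm (e + 1)] at h₁ h₂
    exact ⟨by linarith, by linarith⟩

theorem Kalmanson.rotate [NeZero m] (hsymm : ∀ a b, δ a b = δ b a) (hK : Kalmanson δ)
    (r : Fin m) : Kalmanson (fun a b => δ (a + r) (b + r)) := by
  rw [← Fin.cast_val_eq_self r]
  induction (r : ℕ) with
  | zero => simpa using hK
  | succ k ih =>
    have hshift : ∀ x : Fin m, x + ↑(k + 1) = x + 1 + ↑k := fun x => by rw [Nat.cast_succ]; abel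
    simpa only [hshift] using ih.rotate_one fun _ _ => hsymm _ _

theorem Kalmanson.natCast [NeZero m] (hK : Kalmanson δ) :
    KalmansonOnRange m fun a b => δ a b := by
  have hlt : ∀ {a b : ℕ}, a < b → b < m → (a : Fin m) < b := fun hab hbm => by
    rw [Fin.lt_def, Fin.val_cast_of_lt (hab.trans hbm), Fin.val_cast_of_lt hbm]
    exact hab
  exact fun a b c e hab hbc hce hem =>
    hK _ _ _ _ (hlt hab (by omega)) (hlt hbc (by omega)) (hlt hce hem)

theorem Qcrit_natCast [NeZero m] (hdiag : ∀ a, δ a a = 0) (a b : ℕ) :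
    Qcrit δ a b = natQcrit m (fun a b => δ a b) a b := by
  have hrow : ∀ x : Fin m, ∑ t ∈ univ.erase x, δ x t = ∑ t ∈ range m, δ x t := fun x => by
    rw [sum_erase _ (hdiag x), ← Fin.sum_univ_eq_sum_range]
    simp only [Fin.cast_val_eq_self]
  simp only [Qcrit, natQcrit, hrow]

theorem exists_Qcrit_succ_le_Qcrit_add [NeZero m] (hdis : IsDissimilarity δ) (hK : Kalmanson δ)
    (a : Fin m) {n : ℕ} (hn : 1 ≤ n) (hnm : 2 * n ≤ m) :
    ∃ k : Fin m, Qcrit δ k (k + 1) ≤ Qcrit δ a (a + n) := by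
  have hsum := (hK.rotate hdis.1 a).natCast.sum_natQcrit_sub_nonneg (fun _ _ => hdis.1 _ _)
    (fun _ => hdis.2.2 _) hn hnm
  rw [← sum_const_zero (s := range n)] at hsum
  obtain ⟨k, -, hk⟩ := exists_le_of_sum_le (nonempty_range_iff.2 (by omega)) hsum
  have hdiag : ∀ x, δ (x + a) (x + a) = 0 := fun _ => hdis.2.2 _
  rw [← Qcrit_natCast (δ := fun x y => δ (x + a) (y + a)) hdiag,
    ← Qcrit_natCast (δ := fun x y => δ (x + a) (y + a)) hdiag, Qcrit_rotate, Qcrit_rotate,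
    sub_nonneg] at hk
  have hsucc : ((k + 1 : ℕ) : Fin m) + a = k + a + 1 := by rw [Nat.cast_succ]; abel
  rw [Nat.cast_zero, zero_add, add_comm (n : Fin m), hsucc] at hk
  exact ⟨k + a, hk⟩

theorem exists_Qcrit_succ_le_of_lt [NeZero m] (hdis : IsDissimilarity δ) (hK : Kalmanson δ)
    {a b : Fin m} (hab : a < b) : ∃ k : Fin m, Qcrit δ k (k + 1) ≤ Qcrit δ a b := by
  rw [Fin.lt_def] at hab
  rcases le_or_gt (2 * (b - a : ℕ)) m with h | h
  · have hb : a + ((b - a : ℕ) : Fin m) = b := by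
      rw [Fin.ext_iff, Fin.val_add, Fin.val_cast_of_lt (by omega),
        show (a : ℕ) + (b - a) = b by omega, Nat.mod_eq_of_lt b.isLt]
    simpa only [hb] using exists_Qcrit_succ_le_Qcrit_add hdis hK a (n := b - a) (by omega) h
  · have ha : b + ((m - (b - a) : ℕ) : Fin m) = a := by
      rw [Fin.ext_iff, Fin.val_add, Fin.val_cast_of_lt (by omega),
        show (b : ℕ) + (m - (b - a)) = a + m by omega, Nat.add_mod_right, Nat.mod_eq_of_lt a.isLt]
    rw [Qcrit_comm hdis.1]
    simpa only [ha] using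
      exists_Qcrit_succ_le_Qcrit_add hdis hK b (n := m - (b - a)) (by omega) (by omega)

end FinIndexed

/-- if `δ` is a Kalmanson dissimilarity map on `{1,…,m}` and
`i < j − 3`, then there is an index `k` whose cyclic successor `l`
(`l = k+1` for `k < m`, and `l = 1` for `k = m`) satisfies
`Q_δ(i,j) − Q_δ(k,l) ≥ 0`. -/
theorem Q_nonadjacent_dominated {m : ℕ} (δ : Fin m → Fin m → ℝ)
    (hdis : IsDissimilarity δ) (hK : Kalmanson δ)
    (i j : Fin m) (hij : (i : ℕ) + 3 < (j : ℕ)) :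
    ∃ k l : Fin m, (l : ℕ) = ((k : ℕ) + 1) % m ∧
      Qcrit δ i j - Qcrit δ k l ≥ 0 := by
  have : NeZero m := NeZero.of_pos i.pos
  obtain ⟨k, hk⟩ := exists_Qcrit_succ_le_of_lt hdis hK (Fin.lt_def.2 (by omega : (i : ℕ) < j))
  refine ⟨k, k + 1, ?_, sub_nonneg.2 hk⟩
  rw [Fin.val_add, Fin.val_one', Nat.add_mod_mod]
end
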